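/- Let n ≥ 1 be an integer and let H_m denote the (physicists') Hermite polynomial function H_m(t) = (-1)^m exp(t²) · (d^m/dt^m) exp(-t²). Suppose s, t ∈ ℝ with s < t and H_n has no zero on the interval [s, ∞) (equivalently, s exceeds the largest real zero of H_n, so H_n > 0 and H_{n-1} > 0 on [s, ∞)). Then the ratio ψ_n(x) = H_{n-1}(x)/H_n(x) satisfies 0 < ψ_n(t) < ψ_n(s); that is, ψ_n is strictly decreasing and positive to the right of the largest zero of H_n. Moreover ψ_n(x) → 0 as x → ∞. -/

import Mathlib

/-!
Since `H_m(t) = √2^m He_m(√2 t)` for the probabilists' Hermite polynomials `He_m`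
(`Polynomial.hermite`), it suffices to show that `He_k / He_{k+1}` is positive and strictly
decreasing wherever `He_{k+1}` is positive on `[s, ∞)`. With the weight `φ(x) = exp(-x²/2)`,
the Rodrigues formula gives `(He_k φ)' = -He_{k+1} φ`, and the Wronskian
`W = He_{k+1} He_k' - He_{k+1}' He_k` satisfies `(W φ)' = He_k He_{k+1} φ`. Both weighted
functions tend to `0` at infinity, so `He_k φ` is decreasing, hence positive, on `[s, ∞)`;
then `W φ` is increasing, hence negative, there. Finally `(He_k / He_{k+1})' = W / He_{k+1}²`.
-/

open Real Filter

/-- The physicists' Hermite polynomial function, via the Rodrigues formula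
`H_m(t) = (-1)^m exp(t²) (d^m/dt^m) exp(-t²)`. -/
noncomputable def hermiteFun (m : ℕ) (t : ℝ) : ℝ :=
  (-1 : ℝ) ^ m * Real.exp (t ^ 2) *
    iteratedDeriv m (fun s : ℝ => Real.exp (-s ^ 2)) t

open Polynomial Set Topology

theorem hasDerivAt_exp_neg_sq_div_two (x : ℝ) :
    HasDerivAt (fun y : ℝ => exp (-(y ^ 2 / 2))) (-x * exp (-(x ^ 2 / 2))) x := by
  simpa [mul_comm] using ((hasDerivAt_pow 2 x).div_const 2).fun_neg.exp

theorem tendsto_eval_mul_exp_neg_sq_div_two (p : ℝ[X]) :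
    Tendsto (fun x => p.eval x * exp (-(x ^ 2 / 2))) atTop (𝓝 0) := by
  have h := p.tendsto_div_exp_atTop.mul
    (exp_neg_mul_sq_isLittleO_exp_neg (b := 1 / 2) one_half_pos).tendsto_div_nhds_zero
  rw [zero_mul] at h
  refine h.congr fun x => ?_
  rw [exp_neg x, div_inv_eq_mul]
  field_simp

theorem strictAntiOn_Ici_of_hasDerivAt_neg {f f' : ℝ → ℝ} {s : ℝ}
    (hf : ∀ x, s ≤ x → HasDerivAt f (f' x) x) (hf' : ∀ x, s < x → f' x < 0) :
    StrictAntiOn f (Ici s) := by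
  refine strictAntiOn_of_hasDerivWithinAt_neg (f' := f') (convex_Ici s)
    (fun x hx => (hf x hx).continuousAt.continuousWithinAt) (fun x hx => ?_) (fun x hx => ?_)
  all_goals rw [interior_Ici] at hx
  · exact (hf x hx.le).hasDerivWithinAt
  · exact hf' x hx

theorem StrictAntiOn.pos_of_tendsto_atTop_zero {f : ℝ → ℝ} {s x : ℝ}
    (hf : StrictAntiOn f (Ici s)) (hlim : Tendsto f atTop (𝓝 0)) (hx : s ≤ x) : 0 < f x := by
  have hx1 : s ≤ x + 1 := by linarith
  have : 0 ≤ f (x + 1) := le_of_tendsto hlim <| by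
    filter_upwards [eventually_ge_atTop (x + 1)] with y hy
    exact hf.antitoneOn hx1 (hx1.trans hy) hy
  exact this.trans_lt (hf hx hx1 (lt_add_one x))

theorem pos_of_forall_ne_zero_of_eventually_pos {f : ℝ → ℝ} {s : ℝ} (hf : ContinuousOn f (Ici s))
    (hne : ∀ x, s ≤ x → f x ≠ 0) (hev : ∀ᶠ x in atTop, 0 < f x) {x : ℝ} (hx : s ≤ x) :
    0 < f x := by
  by_contra! hneg
  obtain ⟨M, hMpos, hxM⟩ := (hev.and (eventually_ge_atTop x)).exists
  obtain ⟨z, hz, hz0⟩ := intermediate_value_Icc hxM (hf.mono fun y hy => hx.trans hy.1)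
    ⟨hneg, hMpos.le⟩
  exact hne z (hx.trans hz.1) hz0

namespace Polynomial

theorem derivative_hermite_succ (n : ℕ) :
    derivative (hermite (n + 1)) = (n + 1 : ℤ[X]) * hermite n := by
  induction n with
  | zero => simp
  | succ n ih =>
    rw [hermite_succ (n + 1), derivative_sub, derivative_mul, ih, derivative_mul, hermite_succ n]
    simp only [derivative_X, derivative_add, derivative_natCast, derivative_one]
    push_cast
    ring

theorem wronskian_hermite_succ_hermite (n : ℕ) :
    wronskian (hermite (n + 1)) (hermite n) =
      X * hermite n * hermite (n + 1) - hermite (n + 1) ^ 2 - (n + 1 : ℤ[X]) * hermite n ^ 2 := by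
  rw [wronskian, derivative_hermite_succ, hermite_succ n]
  ring

theorem hasDerivAt_aeval_hermite (n : ℕ) (x : ℝ) :
    HasDerivAt (fun y : ℝ => aeval y (hermite n))
      (x * aeval x (hermite n) - aeval x (hermite (n + 1))) x := by
  refine ((hermite n).hasDerivAt_aeval x).congr_deriv ?_
  simp [hermite_succ]

theorem hasDerivAt_aeval_hermite_succ (n : ℕ) (x : ℝ) :
    HasDerivAt (fun y : ℝ => aeval y (hermite (n + 1))) ((n + 1) * aeval x (hermite n)) x := by
  refine ((hermite (n + 1)).hasDerivAt_aeval x).congr_deriv ?_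
  rw [derivative_hermite_succ]
  simp

theorem eventually_pos_aeval_hermite (n : ℕ) : ∀ᶠ x : ℝ in atTop, 0 < aeval x (hermite n) := by
  simp_rw [← eval_map_algebraMap]
  rcases n with _ | n
  · simp
  · refine (tendsto_atTop_of_leadingCoeff_nonneg _ ?_ ?_).eventually_gt_atTop 0
    · rw [(hermite_monic _).degree_map, degree_hermite]
      exact_mod_cast n.succ_pos
    · rw [((hermite_monic _).map _).leadingCoeff]
      exact zero_le_one

theorem tendsto_aeval_hermite_div_succ (n : ℕ) :
    Tendsto (fun x : ℝ => aeval x (hermite n) / aeval x (hermite (n + 1))) atTop (𝓝 0) := by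
  simp_rw [← eval_map_algebraMap]
  refine div_tendsto_atTop_zero_of_degree_lt _ _ ?_
  rw [(hermite_monic _).degree_map, (hermite_monic _).degree_map, degree_hermite, degree_hermite]
  exact_mod_cast n.lt_succ_self

theorem hasDerivAt_aeval_hermite_mul_gaussian (n : ℕ) (x : ℝ) :
    HasDerivAt (fun y : ℝ => aeval y (hermite n) * exp (-(y ^ 2 / 2)))
      (-(aeval x (hermite (n + 1)) * exp (-(x ^ 2 / 2)))) x :=
  ((hasDerivAt_aeval_hermite n x).mul (hasDerivAt_exp_neg_sq_div_two x)).congr_deriv (by ring)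

theorem hasDerivAt_aeval_wronskian_hermite_mul_gaussian (n : ℕ) (x : ℝ) :
    HasDerivAt
      (fun y : ℝ => aeval y (wronskian (hermite (n + 1)) (hermite n)) * exp (-(y ^ 2 / 2)))
      (aeval x (hermite n) * aeval x (hermite (n + 1)) * exp (-(x ^ 2 / 2))) x := by
  simp only [wronskian_hermite_succ_hermite, map_sub, map_mul, map_pow, map_add, map_one,
    map_natCast, aeval_X]
  have ha := hasDerivAt_aeval_hermite n x
  have hb := hasDerivAt_aeval_hermite_succ n x
  refine (((((hasDerivAt_id x).mul ha).mul hb).sub (hb.pow 2)).sub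
    ((ha.pow 2).const_mul _)).mul (hasDerivAt_exp_neg_sq_div_two x) |>.congr_deriv ?_
  simp only [id_eq, Pi.mul_apply, Pi.pow_apply, Pi.sub_apply, Nat.add_one_sub_one, pow_one,
    Nat.cast_ofNat]
  ring

theorem hasDerivAt_aeval_hermite_div_succ {n : ℕ} {x : ℝ} (hx : aeval x (hermite (n + 1)) ≠ 0) :
    HasDerivAt (fun y : ℝ => aeval y (hermite n) / aeval y (hermite (n + 1)))
      (aeval x (wronskian (hermite (n + 1)) (hermite n)) / aeval x (hermite (n + 1)) ^ 2) x := by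
  refine (((hermite n).hasDerivAt_aeval x).div
    ((hermite (n + 1)).hasDerivAt_aeval x) hx).congr_deriv ?_
  simp only [wronskian, map_sub, map_mul]
  ring

section PositiveOnIci

variable {n : ℕ} {s : ℝ} (h : ∀ x, s ≤ x → 0 < aeval x (hermite (n + 1)))
include h

theorem aeval_hermite_pos_of_succ_pos {x : ℝ} (hx : s ≤ x) : 0 < aeval x (hermite n) := by
  have hanti : StrictAntiOn (fun y : ℝ => aeval y (hermite n) * exp (-(y ^ 2 / 2))) (Ici s) :=
    strictAntiOn_Ici_of_hasDerivAt_neg (fun y _ => hasDerivAt_aeval_hermite_mul_gaussian n y)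
      fun y hy => neg_neg_of_pos (mul_pos (h y hy.le) (exp_pos _))
  have hlim := tendsto_eval_mul_exp_neg_sq_div_two ((hermite n).map (algebraMap ℤ ℝ))
  simp only [eval_map_algebraMap] at hlim
  exact pos_of_mul_pos_left (hanti.pos_of_tendsto_atTop_zero hlim hx) (exp_pos _).le

theorem aeval_wronskian_hermite_succ_hermite_neg {x : ℝ} (hx : s ≤ x) :
    aeval x (wronskian (hermite (n + 1)) (hermite n)) < 0 := by
  have hanti : StrictAntiOn
      (fun y : ℝ => -(aeval y (wronskian (hermite (n + 1)) (hermite n)) * exp (-(y ^ 2 / 2))))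
      (Ici s) := by
    refine strictAntiOn_Ici_of_hasDerivAt_neg
      (fun y _ => (hasDerivAt_aeval_wronskian_hermite_mul_gaussian n y).neg) fun y hy => ?_
    have := aeval_hermite_pos_of_succ_pos h hy.le
    have := h y hy.le
    rw [neg_lt_zero]
    positivity
  have hlim := (tendsto_eval_mul_exp_neg_sq_div_two
    ((wronskian (hermite (n + 1)) (hermite n)).map (algebraMap ℤ ℝ))).neg
  simp only [eval_map_algebraMap, neg_zero] at hlim
  have hpos := hanti.pos_of_tendsto_atTop_zero hlim hx
  rw [neg_pos] at hpos
  exact neg_of_mul_neg_left hpos (exp_pos _).le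

theorem strictAntiOn_aeval_hermite_div_succ :
    StrictAntiOn (fun x : ℝ => aeval x (hermite n) / aeval x (hermite (n + 1))) (Ici s) :=
  strictAntiOn_Ici_of_hasDerivAt_neg (fun x hx => hasDerivAt_aeval_hermite_div_succ (h x hx).ne')
    fun x hx => div_neg_of_neg_of_pos (aeval_wronskian_hermite_succ_hermite_neg h hx.le)
      (pow_pos (h x hx.le) 2)

end PositiveOnIci

end Polynomial

theorem hermiteFun_eq_aeval_hermite (m : ℕ) (t : ℝ) :
    hermiteFun m t = √2 ^ m * aeval (√2 * t) (hermite m) := by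
  have hscale : (fun s : ℝ => exp (-s ^ 2)) = fun s => exp (-((√2 * s) ^ 2 / 2)) := by
    funext s
    rw [mul_pow, sq_sqrt zero_le_two]
    ring_nf
  have hsmooth : ContDiff ℝ m fun y : ℝ => exp (-(y ^ 2 / 2)) := by fun_prop
  rw [hermiteFun, hscale, iteratedDeriv_comp_const_mul hsmooth, iteratedDeriv_eq_iterate]
  beta_reduce
  rw [deriv_gaussian_eq_hermite_mul_gaussian, mul_pow, sq_sqrt zero_le_two,
    mul_div_cancel_left₀ _ two_ne_zero, exp_neg]
  have hsign : (-1 : ℝ) ^ m * (-1) ^ m = 1 := by rw [← mul_pow]; norm_num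
  calc _ = ((-1) ^ m * (-1) ^ m) * (exp (t ^ 2) * (exp (t ^ 2))⁻¹) *
        (√2 ^ m * aeval (√2 * t) (hermite m)) := by ring
    _ = _ := by rw [hsign, mul_inv_cancel₀ (exp_pos _).ne', one_mul, one_mul]

theorem hermiteFun_div_succ (n : ℕ) (t : ℝ) :
    hermiteFun n t / hermiteFun (n + 1) t =
      aeval (√2 * t) (hermite n) / aeval (√2 * t) (hermite (n + 1)) / √2 := by
  rw [hermiteFun_eq_aeval_hermite, hermiteFun_eq_aeval_hermite, pow_succ]
  have : √2 ^ n ≠ 0 := pow_ne_zero _ (by positivity)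
  field_simp

/-- To the right of the largest zero of `H_n`, the ratio
`ψ_n = H_{n-1}/H_n` is positive and strictly decreasing, and tends to `0`
at infinity. -/
theorem hermite_ratio_decreasing (n : ℕ) (hn : 1 ≤ n) (s t : ℝ) (hst : s < t)
    (hnozero : ∀ x : ℝ, s ≤ x → hermiteFun n x ≠ 0) :
    0 < hermiteFun (n - 1) t / hermiteFun n t ∧
      hermiteFun (n - 1) t / hermiteFun n t <
        hermiteFun (n - 1) s / hermiteFun n s ∧
      Tendsto (fun x : ℝ => hermiteFun (n - 1) x / hermiteFun n x)
        atTop (nhds 0) := by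
  obtain ⟨k, rfl⟩ : ∃ k, n = k + 1 := ⟨n - 1, by omega⟩
  simp only [Nat.add_sub_cancel, hermiteFun_div_succ]
  have hsqrt : (0 : ℝ) < √2 := by positivity
  have hne : ∀ u, √2 * s ≤ u → aeval u (hermite (k + 1)) ≠ 0 := fun u hu => by
    have := hnozero (u / √2) ((le_div_iff₀' hsqrt).2 hu)
    rwa [hermiteFun_eq_aeval_hermite, mul_div_cancel₀ _ hsqrt.ne', mul_ne_zero_iff,
      and_iff_right (pow_ne_zero _ hsqrt.ne')] at this
  have hpos : ∀ u, √2 * s ≤ u → 0 < aeval u (hermite (k + 1)) := fun u =>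
    pos_of_forall_ne_zero_of_eventually_pos (hermite (k + 1)).continuous_aeval.continuousOn hne
      (eventually_pos_aeval_hermite _)
  have hts : √2 * s ≤ √2 * t := by gcongr
  have hnum := aeval_hermite_pos_of_succ_pos hpos hts
  have hden := hpos _ hts
  refine ⟨by positivity, ?_, ?_⟩
  · exact div_lt_div_of_pos_right
      (strictAntiOn_aeval_hermite_div_succ hpos self_mem_Ici hts (by gcongr)) hsqrt
  · simpa using ((tendsto_aeval_hermite_div_succ k).comp
      (tendsto_id.const_mul_atTop hsqrt)).div_const √2
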